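/- arXiv:2303.01929 — 3 statements merged into one kernel-verified Lean document; each statement's English description precedes it below -/
import Mathlib

section
/- Let S be a Cu-semigroup satisfying (O5) that is almost divisible. Then the following are equivalent: (i) S is almost unperforated; (ii) for every scale Σ on S, the pair (S,Σ) has locally bounded comparison amplitude (LBCA); (iii) there exists a scale Σ on S such that (S,Σ) has LBCA. -/
open scoped ENNReal

section CuPreamble

variable {S : Type*} [AddCommMonoid S] [PartialOrder S]

/-- The way-below (compact containment) relation: `x ≪ y` if for every increasing
sequence with a supremum above `y`, some term dominates `x`. -/
def WayBelow (x y : S) : Prop :=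
  ∀ (f : ℕ → S) (s : S), Monotone f → IsLUB (Set.range f) s → y ≤ s → ∃ n, x ≤ f n

/-- A Cu-semigroup: a positively ordered commutative monoid satisfying (O1)-(O4). -/
structure IsCuSemigroup (S : Type*) [AddCommMonoid S] [PartialOrder S] : Prop where
  zero_le : ∀ x : S, 0 ≤ x
  add_le_add : ∀ ⦃a b c d : S⦄, a ≤ b → c ≤ d → a + c ≤ b + d
  O1 : ∀ f : ℕ → S, Monotone f → ∃ s : S, IsLUB (Set.range f) s
  O2 : ∀ x : S, ∃ f : ℕ → S, (∀ n, WayBelow (f n) (f (n + 1))) ∧ IsLUB (Set.range f) x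
  O3 : ∀ ⦃x₁ x₂ y₁ y₂ : S⦄, WayBelow x₁ x₂ → WayBelow y₁ y₂ → WayBelow (x₁ + y₁) (x₂ + y₂)
  O4 : ∀ (f g : ℕ → S) (s t : S), Monotone f → Monotone g → IsLUB (Set.range f) s →
    IsLUB (Set.range g) t → IsLUB (Set.range fun n => f n + g n) (s + t)

/-- The axiom (O5), including the strengthened form. -/
def SatisfiesO5 (S : Type*) [AddCommMonoid S] [PartialOrder S] : Prop :=
  (∀ x' x y : S, WayBelow x' x → x ≤ y → ∃ z : S, x' + z ≤ y ∧ y ≤ x + z) ∧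
  (∀ x' x y w' w : S, WayBelow x' x → x + w ≤ y → WayBelow w' w →
    ∃ z : S, WayBelow w' z ∧ x' + z ≤ y ∧ y ≤ x + z)

/-- The axiom (O6). -/
def SatisfiesO6 (S : Type*) [AddCommMonoid S] [PartialOrder S] : Prop :=
  ∀ x' x y z : S, WayBelow x' x → x ≤ y + z →
    ∃ y' z' : S, x' ≤ y' + z' ∧ y' ≤ y ∧ y' ≤ x ∧ z' ≤ z ∧ z' ≤ x

/-- A functional on a Cu-semigroup: a map to `[0,∞]` preserving order, addition, zero,
and suprema of increasing sequences. -/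
structure IsFunctional (l : S → ℝ≥0∞) : Prop where
  mono : Monotone l
  map_zero : l 0 = 0
  map_add : ∀ x y : S, l (x + y) = l x + l y
  map_sup : ∀ (f : ℕ → S) (s : S), Monotone f → IsLUB (Set.range f) s → l s = ⨆ n, l (f n)

/-- Edwards' condition. -/
def EdwardsCondition (S : Type*) [AddCommMonoid S] [PartialOrder S] : Prop :=
  ∀ l : S → ℝ≥0∞, IsFunctional l → ∀ x y : S,
    sInf {r : ℝ≥0∞ | ∃ l₁ l₂ : S → ℝ≥0∞, IsFunctional l₁ ∧ IsFunctional l₂ ∧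
        (∀ s : S, l₁ s + l₂ s = l s) ∧ r = l₁ x + l₂ y} =
    sSup {r : ℝ≥0∞ | ∃ z : S, z ≤ x ∧ z ≤ y ∧ r = l z}

/-- A scale on a Cu-semigroup. -/
structure IsScale (Sg : Set S) : Prop where
  hered : ∀ ⦃x y : S⦄, y ≤ x → x ∈ Sg → y ∈ Sg
  supClosed : ∀ (f : ℕ → S) (s : S), Monotone f → (∀ n, f n ∈ Sg) →
    IsLUB (Set.range f) s → s ∈ Sg
  generates : ∀ x' x : S, WayBelow x' x → ∃ L : List S, (∀ z ∈ L, z ∈ Sg) ∧ x' ≤ L.sum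

/-- The `d`-fold amplification `Σ^{(d)}` of a scale. -/
def scaleAmp (Sg : Set S) : ℕ → Set S
  | 0 => {0}
  | d + 1 => {x : S | ∀ x' : S, WayBelow x' x →
      ∃ f : Fin (d + 1) → S, (∀ i, f i ∈ Sg) ∧ WayBelow x' (∑ i, f i)}

end CuPreamble

/-- Locally bounded comparison amplitude (LBCA) of a scaled Cu-semigroup. -/
def HasLBCA {S : Type*} [AddCommMonoid S] [PartialOrder S] (Sg : Set S) : Prop :=
  ∀ γ : ℝ≥0∞, 0 < γ → γ < 1 → ∀ d : ℕ, ∃ N : ℕ, ∀ x y : S,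
    x ∈ scaleAmp Sg d → y ∈ scaleAmp Sg d →
    (∀ l : S → ℝ≥0∞, IsFunctional l → l x ≤ γ * l y) →
    ∀ n : ℕ, N ≤ n → n • x ≤ n • y

/-! (i) ⇒ (ii) holds with `N = 0`, because in an almost unperforated Cu-semigroup `λ x ≤ γ λ y` for
all functionals and some `γ < 1` already gives `x ≤ y`. Take `x' ≪ x`. Testing the hypothesis
against the `{0, ∞}`-valued map that vanishes on the order ideal generated by `y` gives
`x' ≤ K y`. If `(n+1) x' ≰ n y` for every `n`, a pumping argument shows that `j x' ≤ k x' + m y`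
forces `j ≤ k + m`; hence `j x' ↦ j` extends additively with a value `≤ 1` at `y`, and then, by
Zorn's lemma, to a monotone additive `P : S → [0,∞]` with `P x' = 1 ≥ P y`. Its regularisation
`z ↦ ⨆ w ≪ z, P w` is a functional violating `λ x ≤ γ λ y`.

(iii) ⇒ (i): let `(n+1) x ≤ n y`, `a ≪ a₁ ≪ x`, and pick `b ≪ b₁ ≪ y` with `(n+1) a₁ ≤ n b`.
Almost divisibility gives `g`, `e` with `a ≤ (N+1) g`, `N g ≤ a₁`, `b ≤ (N+2) e` and
`(N+1) e ≤ b₁`, so every functional satisfies `(n+1) N λ g ≤ n (N+2) λ e`, hence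
`λ g ≤ (2n+1)/(2n+2) · λ e` once `N ≥ 4n`. Since `g ≤ a₁ ≪ x` and `e ≤ b₁ ≪ y`, both lie in a
`Σ^{(d)}` with `d` independent of `N`, so LBCA gives `(N+1) g ≤ (N+1) e` for large `N`, and
`a ≤ (N+1) g ≤ (N+1) e ≤ b₁ ≤ y`. Finally (ii) ⇒ (iii) with `Σ = S`. -/

section WayBelow

variable {S : Type*} [PartialOrder S]

theorem WayBelow.le {x y : S} (h : WayBelow x y) : x ≤ y := by
  obtain ⟨n, hn⟩ := h (fun _ => y) y monotone_const
    ⟨by rintro _ ⟨n, rfl⟩; exact le_rfl, fun b hb => hb ⟨0, rfl⟩⟩ le_rfl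
  exact hn

theorem WayBelow.trans_le {x y z : S} (h : WayBelow x y) (h' : y ≤ z) : WayBelow x z :=
  fun f s hf hs hle => h f s hf hs (h'.trans hle)

theorem WayBelow.of_le_left {x y z : S} (h : WayBelow y z) (h' : x ≤ y) : WayBelow x z :=
  fun f s hf hs hle => (h f s hf hs hle).imp fun _ hn => h'.trans hn

end WayBelow

namespace IsCuSemigroup

variable {S : Type*} [AddCommMonoid S] [PartialOrder S] (hCu : IsCuSemigroup S)
include hCu

theorem isOrderedAddMonoid : IsOrderedAddMonoid S :=
  ⟨fun _ _ h _ => hCu.add_le_add h le_rfl, fun _ _ h _ => hCu.add_le_add le_rfl h⟩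

theorem wayBelow_zero (z : S) : WayBelow 0 z :=
  fun _ _ _ _ _ => ⟨0, hCu.zero_le _⟩

theorem wayBelow_nsmul {x y : S} (h : WayBelow x y) (k : ℕ) : WayBelow (k • x) (k • y) := by
  induction k with
  | zero => simpa using hCu.wayBelow_zero 0
  | succ k ih => rw [succ_nsmul, succ_nsmul]; exact hCu.O3 ih h

theorem exists_chain (x : S) :
    ∃ f : ℕ → S, Monotone f ∧ (∀ n, WayBelow (f n) x) ∧ IsLUB (Set.range f) x := by
  obtain ⟨f, hf, hlub⟩ := hCu.O2 x
  exact ⟨f, monotone_nat_of_le_succ fun n => (hf n).le,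
    fun n => (hf n).trans_le (hlub.1 ⟨n + 1, rfl⟩), hlub⟩

theorem exists_wayBelow_wayBelow {w x : S} (h : WayBelow w x) :
    ∃ u, WayBelow w u ∧ WayBelow u x := by
  obtain ⟨f, hf, hlub⟩ := hCu.O2 x
  obtain ⟨n, hn⟩ := h f x (monotone_nat_of_le_succ fun n => (hf n).le) hlub le_rfl
  exact ⟨f (n + 1), (hf n).of_le_left hn, (hf (n + 1)).trans_le (hlub.1 ⟨n + 2, rfl⟩)⟩

theorem le_of_forall_wayBelow_le {x y : S} (h : ∀ x', WayBelow x' x → x' ≤ y) : x ≤ y := by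
  obtain ⟨_, -, hfx, hlub⟩ := hCu.exists_chain x
  exact hlub.2 (Set.forall_mem_range.2 fun n => h _ (hfx n))

theorem exists_le_add_of_wayBelow_add {w a b : S} (h : WayBelow w (a + b)) :
    ∃ a' b', WayBelow a' a ∧ WayBelow b' b ∧ w ≤ a' + b' := by
  obtain ⟨f, hf, hfa, hlubf⟩ := hCu.exists_chain a
  obtain ⟨g, hg, hgb, hlubg⟩ := hCu.exists_chain b
  obtain ⟨n, hn⟩ := h _ _ (fun i j hij => hCu.add_le_add (hf hij) (hg hij))
    (hCu.O4 f g a b hf hg hlubf hlubg) le_rfl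
  exact ⟨f n, g n, hfa n, hgb n, hn⟩

theorem isLUB_nsmul {f : ℕ → S} {s : S} (hf : Monotone f) (hs : IsLUB (Set.range f) s) (k : ℕ) :
    IsLUB (Set.range fun n => k • f n) (k • s) := by
  have := hCu.isOrderedAddMonoid
  induction k with
  | zero => simp [isLUB_singleton]
  | succ k ih =>
    simp only [succ_nsmul]
    exact hCu.O4 _ f _ s (fun i j hij => nsmul_le_nsmul_right (hf hij) k) hf ih hs

theorem exists_le_nsmul_of_wayBelow {u v w : S} (hu : WayBelow u v) {k : ℕ} (hv : v ≤ k • w) :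
    ∃ w', WayBelow w' w ∧ u ≤ k • w' := by
  have := hCu.isOrderedAddMonoid
  obtain ⟨f, hf, hfw, hlub⟩ := hCu.exists_chain w
  obtain ⟨n, hn⟩ := hu _ _ (fun i j hij => nsmul_le_nsmul_right (hf hij) k)
    (hCu.isLUB_nsmul hf hlub k) hv
  exact ⟨f n, hfw n, hn⟩

end IsCuSemigroup

theorem IsFunctional.map_nsmul {S : Type*} [AddCommMonoid S] [PartialOrder S] {l : S → ℝ≥0∞}
    (hl : IsFunctional l) (k : ℕ) (a : S) : l (k • a) = k * l a := by
  induction k with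
  | zero => simpa using hl.map_zero
  | succ k ih => rw [succ_nsmul, hl.map_add, ih, Nat.cast_succ, add_mul, one_mul]

namespace IsCuSemigroup

variable {S : Type*} [AddCommMonoid S] [PartialOrder S] (hCu : IsCuSemigroup S)
include hCu

theorem isFunctional_iSup_wayBelow (P : S →+o ℝ≥0∞) :
    IsFunctional fun z => ⨆ w : {w // WayBelow w z}, P w.1 where
  mono _ _ hab := iSup_le fun w => le_iSup_of_le ⟨w, w.2.trans_le hab⟩ le_rfl
  map_zero :=
    le_antisymm (iSup_le fun w => (OrderHomClass.mono P w.2.le).trans_eq (map_zero P)) bot_le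
  map_add a b := by
    have : Nonempty {w // WayBelow w a} := ⟨⟨0, hCu.wayBelow_zero a⟩⟩
    have : Nonempty {w // WayBelow w b} := ⟨⟨0, hCu.wayBelow_zero b⟩⟩
    refine le_antisymm (iSup_le fun w => ?_) (ENNReal.iSup_add_iSup_le fun w₁ w₂ => ?_)
    · obtain ⟨a', b', ha', hb', hw⟩ := hCu.exists_le_add_of_wayBelow_add w.2
      calc P w.1 ≤ P (a' + b') := OrderHomClass.mono P hw
        _ = P a' + P b' := map_add P a' b'
        _ ≤ _ := _root_.add_le_add (le_iSup_of_le ⟨a', ha'⟩ le_rfl) (le_iSup_of_le ⟨b', hb'⟩ le_rfl)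
    · rw [← map_add]
      exact le_iSup_of_le ⟨w₁ + w₂, hCu.O3 w₁.2 w₂.2⟩ le_rfl
  map_sup f s _ hs := by
    refine le_antisymm (iSup_le fun w => ?_)
      (iSup_le fun n => iSup_le fun w => le_iSup_of_le ⟨w, w.2.trans_le (hs.1 ⟨n, rfl⟩)⟩ le_rfl)
    obtain ⟨u, hwu, hus⟩ := hCu.exists_wayBelow_wayBelow w.2
    obtain ⟨n, hn⟩ := hus f s ‹_› hs le_rfl
    exact le_iSup_of_le n (le_iSup_of_le ⟨w, hwu.trans_le hn⟩ le_rfl)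

theorem le_mul_of_forall_isFunctional {γ : ℝ≥0∞} {x y : S}
    (h : ∀ l : S → ℝ≥0∞, IsFunctional l → l x ≤ γ * l y) (P : S →+o ℝ≥0∞) {x' : S}
    (hx' : WayBelow x' x) : P x' ≤ γ * P y :=
  calc P x' ≤ ⨆ w : {w // WayBelow w x}, P w.1 := le_iSup_of_le ⟨x', hx'⟩ le_rfl
    _ ≤ γ * ⨆ w : {w // WayBelow w y}, P w.1 := h _ (hCu.isFunctional_iSup_wayBelow P)
    _ ≤ γ * P y := by gcongr; exact iSup_le fun w => OrderHomClass.mono P w.2.le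

end IsCuSemigroup

section OrderedMonoid

variable {S : Type*} [AddCommMonoid S] [PartialOrder S] [IsOrderedAddMonoid S]

theorem add_nsmul_le_add_nsmul {a b c : S} (h : a + b ≤ a + c) : ∀ t : ℕ, a + t • b ≤ a + t • c
  | 0 => by simp
  | t + 1 =>
    calc a + (t + 1) • b = (a + t • b) + b := by rw [succ_nsmul, add_assoc]
      _ ≤ (a + t • c) + b := add_le_add_left (add_nsmul_le_add_nsmul h t) b
      _ = (a + b) + t • c := by abel
      _ ≤ (a + c) + t • c := add_le_add_left h _
      _ = a + (t + 1) • c := by rw [succ_nsmul]; abel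

/-- Iterating `j • x ≤ k • x + m • y` with `j > k + m` would eventually give `(M+1) • x ≤ M • y`. -/
theorem le_add_of_nsmul_le_add_nsmul (hpos : ∀ z : S, 0 ≤ z) {x y : S} {K : ℕ}
    (hxy : x ≤ K • y) (hx : ∀ n : ℕ, ¬ (n + 1) • x ≤ n • y) {j k m : ℕ}
    (h : j • x ≤ k • x + m • y) : j ≤ k + m := by
  by_contra! hj
  obtain ⟨δ, rfl⟩ : ∃ δ, j = k + δ := ⟨j - k, by omega⟩
  set t := k * K + 1 with ht
  have hpump := add_nsmul_le_add_nsmul (a := k • x) (b := δ • x) (c := m • y)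
    (by rwa [← add_nsmul]) t
  have hδ : t * m + t ≤ t * δ := Nat.mul_le_mul_left t (show m + 1 ≤ δ by omega)
  refine hx (k * K + t * m) ?_
  calc (k * K + t * m + 1) • x ≤ (k + t * δ) • x := nsmul_le_nsmul_left (hpos x) (by linarith)
    _ = k • x + t • δ • x := by rw [add_nsmul, mul_nsmul']
    _ ≤ k • x + t • m • y := hpump
    _ ≤ (k * K) • y + (t * m) • y := by
      rw [mul_nsmul', mul_nsmul']
      exact add_le_add_left (nsmul_le_nsmul_right hxy k) _
    _ = (k * K + t * m) • y := (add_nsmul ..).symm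

theorem nsmul_add_nsmul_le_of_le {a b d e x : S} {j k m : ℕ} (h : a + j • x ≤ b + k • x)
    (hde : d ≤ e + m • x) : m • a + j • d ≤ (m • b + j • e) + (m * k) • x :=
  calc m • a + j • d ≤ m • a + j • (e + m • x) := add_le_add_right (nsmul_le_nsmul_right hde j) _
    _ = m • (a + j • x) + j • e := by
      rw [smul_add, smul_add, ← mul_nsmul', ← mul_nsmul', mul_comm]; abel
    _ ≤ m • (b + k • x) + j • e := add_le_add_left (nsmul_le_nsmul_right h m) _
    _ = (m • b + j • e) + (m * k) • x := by rw [smul_add, mul_nsmul']; abel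

end OrderedMonoid

theorem ENNReal.add_mul_tsub_div_le {x r u v : ℝ≥0∞} {j m : ℕ} (hm : m ≠ 0) (hx : x ≤ r)
    (h : m * x + j * u ≤ m * r + j * v) : x + j * ((u - v) / m) ≤ r := by
  by_cases huv : u ≤ v
  · simpa [tsub_eq_zero_of_le huv] using hx
  have hv : v ≠ ⊤ := ne_top_of_lt (not_le.1 huv)
  obtain ⟨s, rfl⟩ : ∃ s, u = v + s := ⟨u - v, (add_tsub_cancel_of_le (not_le.1 huv).le).symm⟩
  have hm0 : (m : ℝ≥0∞) ≠ 0 := Nat.cast_ne_zero.2 hm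
  have hs : m * x + j * s ≤ m * r := by
    rw [← ENNReal.add_le_add_iff_right (ENNReal.mul_ne_top (ENNReal.natCast_ne_top j) hv)]
    calc m * x + j * s + j * v = m * x + j * (v + s) := by ring
      _ ≤ m * r + j * v := h
  rw [ENNReal.add_sub_cancel_left hv, ← ENNReal.mul_le_mul_iff_right hm0 (ENNReal.natCast_ne_top m)]
  calc m * (x + j * (s / m)) = m * x + j * (m * (s / m)) := by ring
    _ = m * x + j * s := by rw [ENNReal.mul_div_cancel hm0 (ENNReal.natCast_ne_top m)]
    _ ≤ m * r := hs

theorem AddSubmonoid.mem_sup_closure_singleton {S : Type*} [AddCommMonoid S]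
    {T : AddSubmonoid S} {x z : S} :
    z ∈ T ⊔ AddSubmonoid.closure {x} ↔ ∃ a ∈ T, ∃ k : ℕ, a + k • x = z := by
  simp only [AddSubmonoid.mem_sup, AddSubmonoid.mem_closure_singleton]
  constructor
  · rintro ⟨a, ha, _, ⟨k, rfl⟩, rfl⟩; exact ⟨a, ha, k, rfl⟩
  · rintro ⟨a, ha, k, rfl⟩; exact ⟨a, ha, _, ⟨k, rfl⟩, rfl⟩

structure PartialState (S : Type*) [AddCommMonoid S] [PartialOrder S] where
  dom : AddSubmonoid S
  toFun : S → ℝ≥0∞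
  monotone' : Monotone toFun
  map_zero' : toFun 0 = 0
  map_add' : ∀ a ∈ dom, ∀ b ∈ dom, toFun (a + b) = toFun a + toFun b

namespace PartialState

variable {S : Type*} [AddCommMonoid S] [PartialOrder S]

instance : CoeFun (PartialState S) fun _ => S → ℝ≥0∞ := ⟨toFun⟩

instance : Preorder (PartialState S) where
  le p q := p.dom ≤ q.dom ∧ ∀ z ∈ p.dom, q z = p z
  le_refl p := ⟨le_rfl, fun _ _ => rfl⟩
  le_trans p q r hpq hqr :=
    ⟨hpq.1.trans hqr.1, fun z hz => (hqr.2 z (hpq.1 hz)).trans (hpq.2 z hz)⟩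

instance : Bot (PartialState S) :=
  ⟨{ dom := ⊥, toFun := 0, monotone' := monotone_const, map_zero' := rfl
     map_add' := fun _ _ _ _ => (add_zero 0).symm }⟩

@[simp]
theorem bot_apply (z : S) : (⊥ : PartialState S) z = 0 := rfl

theorem map_nsmul (p : PartialState S) {a : S} (ha : a ∈ p.dom) (k : ℕ) :
    p (k • a) = k * p a := by
  induction k with
  | zero => simpa using p.map_zero'
  | succ k ih =>
    rw [succ_nsmul, p.map_add' _ (nsmul_mem ha k) _ ha, ih, Nat.cast_succ, add_mul, one_mul]

/-- The values `c` at `x` compatible with an additive extension of `p` to `dom + ℕ x`. -/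
def IsAdmissible (p : PartialState S) (x : S) (c : ℝ≥0∞) : Prop :=
  ∀ a ∈ p.dom, ∀ b ∈ p.dom, ∀ j k : ℕ, a + j • x ≤ b + k • x → p a + j * c ≤ p b + k * c

noncomputable def extendFun (p : PartialState S) (x : S) (c : ℝ≥0∞) (z : S) : ℝ≥0∞ :=
  ⨆ t : {t : S × ℕ // t.1 ∈ p.dom ∧ t.1 + t.2 • x ≤ z}, p t.1.1 + t.1.2 * c

theorem extendFun_add_nsmul {p : PartialState S} {x : S} {c : ℝ≥0∞} (hc : p.IsAdmissible x c)
    {a : S} (ha : a ∈ p.dom) (k : ℕ) : p.extendFun x c (a + k • x) = p a + k * c :=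
  le_antisymm (iSup_le fun t => hc _ t.2.1 _ ha _ _ t.2.2)
    (le_iSup_of_le ⟨(a, k), ha, le_rfl⟩ le_rfl)

noncomputable def extend (p : PartialState S) (x : S) (c : ℝ≥0∞) (hc : p.IsAdmissible x c) :
    PartialState S where
  dom := p.dom ⊔ AddSubmonoid.closure {x}
  toFun := p.extendFun x c
  monotone' _ _ h := iSup_le fun t => le_iSup_of_le ⟨t.1, t.2.1, t.2.2.trans h⟩ le_rfl
  map_zero' := by simpa [p.map_zero'] using extendFun_add_nsmul hc (zero_mem _) 0
  map_add' := by
    simp only [AddSubmonoid.mem_sup_closure_singleton]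
    rintro _ ⟨a, ha, k, rfl⟩ _ ⟨b, hb, l, rfl⟩
    rw [show a + k • x + (b + l • x) = (a + b) + (k + l) • x by rw [add_nsmul]; abel,
      extendFun_add_nsmul hc (add_mem ha hb), extendFun_add_nsmul hc ha,
      extendFun_add_nsmul hc hb, p.map_add' a ha b hb]
    push_cast
    ring

section Extend

variable {p : PartialState S} {x : S} {c : ℝ≥0∞} (hc : p.IsAdmissible x c)
include hc

theorem extend_apply_add_nsmul {a : S} (ha : a ∈ p.dom) (k : ℕ) :
    p.extend x c hc (a + k • x) = p a + k * c :=
  extendFun_add_nsmul hc ha k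

theorem le_extend : p ≤ p.extend x c hc :=
  ⟨le_sup_left, fun z hz => by simpa using extend_apply_add_nsmul hc hz 0⟩

theorem self_mem_extend_dom : x ∈ (p.extend x c hc).dom :=
  AddSubmonoid.mem_sup_closure_singleton.2 ⟨0, zero_mem _, 1, by simp⟩

theorem extend_apply_self : p.extend x c hc x = c := by
  simpa [p.map_zero'] using extend_apply_add_nsmul hc (zero_mem _) 1

end Extend

noncomputable def lowerValue (p : PartialState S) (x : S) : ℝ≥0∞ :=
  ⨆ t : {t : S × S × ℕ // t.1 ∈ p.dom ∧ t.2.1 ∈ p.dom ∧ t.2.2 ≠ 0 ∧ t.1 ≤ t.2.1 + t.2.2 • x},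
    (p t.1.1 - p t.1.2.1) / t.1.2.2

theorem le_add_mul_lowerValue (p : PartialState S) {x a b : S} (ha : a ∈ p.dom)
    (hb : b ∈ p.dom) {m : ℕ} (h : a ≤ b + m • x) : p a ≤ p b + m * p.lowerValue x := by
  rcases eq_or_ne m 0 with rfl | hm
  · simpa using p.monotone' (by simpa using h)
  have : (p a - p b) / m ≤ p.lowerValue x := le_iSup_of_le ⟨(a, b, m), ha, hb, hm, h⟩ le_rfl
  rwa [ENNReal.div_le_iff (Nat.cast_ne_zero.2 hm) (ENNReal.natCast_ne_top m), tsub_le_iff_left,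
    mul_comm] at this

theorem exists_forall_le_of_isChain {c : Set (PartialState S)} (hc : IsChain (· ≤ ·) c)
    (hne : c.Nonempty) : ∃ q : PartialState S, ∀ p ∈ c, p ≤ q := by
  have : Nonempty c := hne.to_subtype
  have htot : ∀ p q : c, (p : PartialState S) ≤ q ∨ (q : PartialState S) ≤ p :=
    fun p q => hc.total p.2 q.2
  -- values off the domains are uncontrolled, so only values on the domains are glued
  let F : S → ℝ≥0∞ := fun z =>
    ⨆ p : c, ⨆ a : {a // a ∈ (p : PartialState S).dom ∧ a ≤ z}, (p : PartialState S) a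
  have hF : ∀ (p : c) {z : S}, z ∈ (p : PartialState S).dom → F z = p.1 z := by
    intro p z hz
    refine le_antisymm (iSup₂_le fun q a => ?_) (le_iSup₂_of_le p ⟨z, hz, le_rfl⟩ le_rfl)
    rcases htot q p with h | h
    · rw [← h.2 a a.2.1]; exact p.1.monotone' a.2.2
    · exact (q.1.monotone' a.2.2).trans_eq (h.2 z hz)
  have hdir : Directed (· ≤ ·) fun p : c => (p : PartialState S).dom := fun p q =>
    (htot p q).elim (fun h => ⟨q, h.1, le_rfl⟩) fun h => ⟨p, le_rfl, h.1⟩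
  refine ⟨{ dom := ⨆ p : c, (p : PartialState S).dom
            toFun := F
            monotone' := fun _ _ h => iSup_mono fun p => iSup_le fun a =>
              le_iSup_of_le ⟨a, a.2.1, a.2.2.trans h⟩ le_rfl
            map_zero' := (hF (Classical.arbitrary c) (zero_mem _)).trans (map_zero' _)
            map_add' := ?_ }, fun p hp => ⟨le_iSup (fun p : c => p.1.dom) ⟨p, hp⟩,
              fun z hz => hF ⟨p, hp⟩ hz⟩⟩
  intro a ha b hb
  obtain ⟨p, hpa⟩ := (AddSubmonoid.mem_iSup_of_directed hdir).1 ha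
  obtain ⟨q, hqb⟩ := (AddSubmonoid.mem_iSup_of_directed hdir).1 hb
  obtain ⟨r, har, hbr⟩ : ∃ r : c, a ∈ r.1.dom ∧ b ∈ r.1.dom :=
    (htot p q).elim (fun h => ⟨q, h.1 hpa, hqb⟩) fun h => ⟨p, hpa, h.1 hqb⟩
  rw [hF r (add_mem har hbr), hF r har, hF r hbr, r.1.map_add' a har b hbr]

noncomputable def toOrderAddMonoidHom (p : PartialState S) (hp : p.dom = ⊤) : S →+o ℝ≥0∞ where
  toFun := p
  map_zero' := p.map_zero'
  map_add' a b := p.map_add' a (hp ▸ trivial) b (hp ▸ trivial)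
  monotone' := p.monotone'

variable [IsOrderedAddMonoid S]

theorem isAdmissible_lowerValue (hpos : ∀ z : S, 0 ≤ z) (p : PartialState S) (x : S) :
    p.IsAdmissible x (p.lowerValue x) := by
  intro a ha b hb j k h
  have hbase : p a ≤ p b + k * p.lowerValue x :=
    p.le_add_mul_lowerValue ha hb ((le_add_of_nonneg_right (nsmul_nonneg (hpos x) j)).trans h)
  have : Nonempty {t : S × S × ℕ //
      t.1 ∈ p.dom ∧ t.2.1 ∈ p.dom ∧ t.2.2 ≠ 0 ∧ t.1 ≤ t.2.1 + t.2.2 • x} :=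
    ⟨⟨(0, 0, 1), zero_mem _, zero_mem _, one_ne_zero, by simpa using hpos x⟩⟩
  conv_lhs => rw [lowerValue, ENNReal.mul_iSup, ENNReal.add_iSup]
  refine iSup_le fun ⟨⟨d, e, m⟩, hd, he, hm, hde⟩ => ENNReal.add_mul_tsub_div_le hm hbase ?_
  have key := p.le_add_mul_lowerValue (add_mem (nsmul_mem ha m) (nsmul_mem hd j))
    (add_mem (nsmul_mem hb m) (nsmul_mem he j)) (nsmul_add_nsmul_le_of_le h hde)
  rw [p.map_add' _ (nsmul_mem ha m) _ (nsmul_mem hd j), p.map_add' _ (nsmul_mem hb m) _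
    (nsmul_mem he j), p.map_nsmul ha, p.map_nsmul hd, p.map_nsmul hb, p.map_nsmul he] at key
  calc _ ≤ _ := key
    _ = _ := by push_cast; ring

theorem exists_le_dom_eq_top (hpos : ∀ z : S, 0 ≤ z) (p : PartialState S) :
    ∃ q, p ≤ q ∧ q.dom = ⊤ := by
  obtain ⟨q, hpq, hq⟩ := zorn_le_nonempty_Ici₀ p
    (fun c _ hc r hr => exists_forall_le_of_isChain hc ⟨r, hr⟩) p le_rfl
  refine ⟨q, hpq, (AddSubmonoid.eq_top_iff' _).2 fun x => ?_⟩
  have hx := q.isAdmissible_lowerValue hpos x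
  exact (hq (le_extend hx)).1 (self_mem_extend_dom hx)

end PartialState

theorem exists_orderAddMonoidHom_of_forall_not_nsmul_le {S : Type*} [AddCommMonoid S]
    [PartialOrder S] [IsOrderedAddMonoid S] (hpos : ∀ z : S, 0 ≤ z) {x y : S} {K : ℕ}
    (hxy : x ≤ K • y) (hx : ∀ n : ℕ, ¬ (n + 1) • x ≤ n • y) :
    ∃ P : S →+o ℝ≥0∞, P x = 1 ∧ P y ≤ 1 := by
  have h₀ : (⊥ : PartialState S).IsAdmissible x 1 := by
    rintro a ha b hb j k h
    obtain rfl := AddSubmonoid.mem_bot.1 ha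
    obtain rfl := AddSubmonoid.mem_bot.1 hb
    have := le_add_of_nsmul_le_add_nsmul hpos hxy hx (m := 0) (by simpa using h)
    simpa using this
  set p₁ := (⊥ : PartialState S).extend x 1 h₀
  have hp₁ : ∀ j : ℕ, p₁ (j • x) = j := fun j => by
    simpa using PartialState.extend_apply_add_nsmul h₀ (zero_mem _) j
  have hlow : p₁.lowerValue y ≤ 1 := by
    refine iSup_le fun t => ?_
    obtain ⟨⟨d, e, m⟩, hd, he, hm, hde⟩ := t
    dsimp only at hd he hm hde ⊢
    obtain ⟨_, h0, j, rfl⟩ := AddSubmonoid.mem_sup_closure_singleton.1 hd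
    obtain ⟨_, h0', k, rfl⟩ := AddSubmonoid.mem_sup_closure_singleton.1 he
    obtain rfl := AddSubmonoid.mem_bot.1 h0
    obtain rfl := AddSubmonoid.mem_bot.1 h0'
    simp only [zero_add] at hde ⊢
    rw [hp₁, hp₁, ENNReal.div_le_iff (Nat.cast_ne_zero.2 hm) (ENNReal.natCast_ne_top m), one_mul,
      ← ENNReal.natCast_sub, Nat.cast_le]
    have := le_add_of_nsmul_le_add_nsmul hpos hxy hx hde
    omega
  have hp₂ := p₁.isAdmissible_lowerValue hpos y
  obtain ⟨q, hq, htop⟩ := (p₁.extend y _ hp₂).exists_le_dom_eq_top hpos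
  refine ⟨q.toOrderAddMonoidHom htop, ?_, ?_⟩
  · change q x = 1
    rw [hq.2 x ((PartialState.le_extend hp₂).1 (PartialState.self_mem_extend_dom h₀)),
      (PartialState.le_extend hp₂).2 x (PartialState.self_mem_extend_dom h₀),
      PartialState.extend_apply_self h₀]
  · change q y ≤ 1
    rw [hq.2 y (PartialState.self_mem_extend_dom hp₂), PartialState.extend_apply_self hp₂]
    exact hlow

open Classical in
noncomputable def idealIndicator {S : Type*} [AddCommMonoid S] [PartialOrder S]
    [IsOrderedAddMonoid S] (hpos : ∀ z : S, 0 ≤ z) (y : S) : S →+o ℝ≥0∞ where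
  toFun z := if ∃ K : ℕ, z ≤ K • y then 0 else ⊤
  map_zero' := if_pos ⟨0, by simp⟩
  map_add' a b := by
    have hab : (∃ K : ℕ, a + b ≤ K • y) ↔ (∃ K : ℕ, a ≤ K • y) ∧ ∃ K : ℕ, b ≤ K • y :=
      ⟨fun ⟨K, hK⟩ => ⟨⟨K, (le_add_of_nonneg_right (hpos b)).trans hK⟩,
          ⟨K, (le_add_of_nonneg_left (hpos a)).trans hK⟩⟩,
        fun ⟨⟨K, hK⟩, ⟨L, hL⟩⟩ => ⟨K + L, add_nsmul y K L ▸ add_le_add hK hL⟩⟩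
    simp only [hab]
    split_ifs <;> simp_all
  monotone' a b hab := by
    by_cases hb : ∃ K : ℕ, b ≤ K • y
    · simp [hb, show ∃ K : ℕ, a ≤ K • y from hb.imp fun _ => hab.trans]
    · simp [hb]

open Classical in
theorem idealIndicator_apply {S : Type*} [AddCommMonoid S] [PartialOrder S]
    [IsOrderedAddMonoid S] (hpos : ∀ z : S, 0 ≤ z) (y z : S) :
    idealIndicator hpos y z = if ∃ K : ℕ, z ≤ K • y then 0 else ⊤ :=
  rfl

namespace IsCuSemigroup

variable {S : Type*} [AddCommMonoid S] [PartialOrder S] (hCu : IsCuSemigroup S)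
include hCu

theorem le_of_forall_isFunctional_le_mul
    (hunp : ∀ x y : S, (∃ n : ℕ, (n + 1) • x ≤ n • y) → x ≤ y) {γ : ℝ≥0∞} (hγ : γ < 1)
    {x y : S} (h : ∀ l : S → ℝ≥0∞, IsFunctional l → l x ≤ γ * l y) : x ≤ y := by
  have := hCu.isOrderedAddMonoid
  refine hCu.le_of_forall_wayBelow_le fun x' hx' => ?_
  obtain ⟨K, hK⟩ : ∃ K : ℕ, x' ≤ K • y := by
    by_contra hK
    have := hCu.le_mul_of_forall_isFunctional h (idealIndicator hCu.zero_le y) hx'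
    rw [idealIndicator_apply, idealIndicator_apply, if_neg hK, if_pos ⟨1, (one_nsmul y).ge⟩,
      mul_zero, nonpos_iff_eq_zero] at this
    exact ENNReal.top_ne_zero this
  by_contra hxy
  obtain ⟨P, hPx, hPy⟩ := exists_orderAddMonoidHom_of_forall_not_nsmul_le hCu.zero_le hK
    fun n hn => hxy (hunp x' y ⟨n, hn⟩)
  have := (hCu.le_mul_of_forall_isFunctional h P hx').trans (mul_le_of_le_one_right' hPy)
  rw [hPx] at this
  exact not_le.2 hγ this

theorem hasLBCA_of_almostUnperforated
    (hunp : ∀ x y : S, (∃ n : ℕ, (n + 1) • x ≤ n • y) → x ≤ y) (Sg : Set S) : HasLBCA Sg := by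
  have := hCu.isOrderedAddMonoid
  exact fun _ _ hγ _ => ⟨0, fun _ _ _ _ h n _ =>
    nsmul_le_nsmul_right (hCu.le_of_forall_isFunctional_le_mul hunp hγ h) n⟩

end IsCuSemigroup

theorem List.sum_eq_sum_univ_getD {M : Type*} [AddCommMonoid M] (L : List M) :
    ∀ {d : ℕ}, L.length ≤ d → ∑ i : Fin d, L.getD i 0 = L.sum := by
  induction L with
  | nil => intro d _; simp
  | cons a L ih =>
    intro d hd
    obtain ⟨d, rfl⟩ : ∃ d', d = d' + 1 := ⟨d - 1, by simp at hd; omega⟩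
    rw [Fin.sum_univ_succ]
    simp only [Fin.val_zero, Fin.val_succ, List.getD_cons_zero, List.getD_cons_succ,
      List.sum_cons]
    rw [ih (by simpa using hd)]

namespace IsScale

variable {S : Type*} [AddCommMonoid S] [PartialOrder S] {Sg : Set S} (hSg : IsScale Sg)
include hSg

theorem zero_mem (hpos : ∀ z : S, 0 ≤ z) {a b : S} (hab : WayBelow a b) (ha : ¬ a ≤ 0) :
    (0 : S) ∈ Sg := by
  obtain ⟨L, hL, haL⟩ := hSg.generates a b hab
  cases L with
  | nil => exact absurd (by simpa using haL) ha
  | cons z L => exact hSg.hered (hpos z) (hL z List.mem_cons_self)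

theorem exists_forall_mem_scaleAmp (h0 : (0 : S) ∈ Sg) {z Z : S} (hz : WayBelow z Z) :
    ∃ d₀ : ℕ, ∀ d, d₀ ≤ d → ∀ u, u ≤ z → u ∈ scaleAmp Sg (d + 1) := by
  obtain ⟨L, hL, hzL⟩ := hSg.generates z Z hz
  refine ⟨L.length, fun d hd u hu w hw => ⟨fun i => L.getD i 0, fun i => ?_, ?_⟩⟩
  · dsimp only
    rcases lt_or_ge (i : ℕ) L.length with h | h
    · rw [List.getD_eq_getElem _ _ h]; exact hL _ (L.getElem_mem h)
    · rw [List.getD_eq_default _ _ h]; exact h0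
  · rw [L.sum_eq_sum_univ_getD (by omega)]
    exact hw.trans_le (hu.trans hzL)

end IsScale

theorem isScale_univ {S : Type*} [AddCommMonoid S] [PartialOrder S] :
    IsScale (Set.univ : Set S) where
  hered _ _ _ _ := trivial
  supClosed _ _ _ _ _ := trivial
  generates _ x h := ⟨[x], by simp, by simpa using h.le⟩

theorem ENNReal.le_div_mul_of_mul_le {p q r s : ℕ} (hp : p ≠ 0) (hs : s ≠ 0)
    (hqr : q * s ≤ r * p) {u v : ℝ≥0∞} (h : p * u ≤ q * v) : u ≤ (r / s : ℝ≥0∞) * v := by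
  rw [← ENNReal.mul_div_right_comm, ENNReal.le_div_iff_mul_le (Or.inl (Nat.cast_ne_zero.2 hs))
    (Or.inl (ENNReal.natCast_ne_top s)), ← ENNReal.mul_le_mul_iff_right (Nat.cast_ne_zero.2 hp)
    (ENNReal.natCast_ne_top p)]
  calc (p : ℝ≥0∞) * (u * s) = s * (p * u) := by ring
    _ ≤ s * (q * v) := by gcongr
    _ = ((q * s : ℕ) : ℝ≥0∞) * v := by push_cast; ring
    _ ≤ ((r * p : ℕ) : ℝ≥0∞) * v := by gcongr
    _ = p * (r * v) := by push_cast; ring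

namespace IsCuSemigroup

variable {S : Type*} [AddCommMonoid S] [PartialOrder S] (hCu : IsCuSemigroup S)
  (hdiv : ∀ x' x : S, WayBelow x' x → ∀ n : ℕ, ∃ y : S, n • y ≤ x ∧ x' ≤ (n + 1) • y)
  {Sg : Set S} (hSg : IsScale Sg) (hL : HasLBCA Sg)
include hCu hdiv hSg hL

theorem le_of_nsmul_le_nsmul_of_hasLBCA (h0 : (0 : S) ∈ Sg) {n : ℕ} {a a₁ a₂ b b₁ b₂ : S}
    (ha : WayBelow a a₁) (ha₁ : WayBelow a₁ a₂) (hb : WayBelow b b₁) (hb₁ : WayBelow b₁ b₂)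
    (hab : (n + 1) • a₁ ≤ n • b) : a ≤ b₁ := by
  have := hCu.isOrderedAddMonoid
  obtain ⟨dA, hdA⟩ := hSg.exists_forall_mem_scaleAmp h0 ha₁
  obtain ⟨dB, hdB⟩ := hSg.exists_forall_mem_scaleAmp h0 hb₁
  set γ : ℝ≥0∞ := ((2 * n + 1 : ℕ) : ℝ≥0∞) / ((2 * n + 2 : ℕ) : ℝ≥0∞) with hγ
  have hγ0 : 0 < γ := ENNReal.div_pos (Nat.cast_ne_zero.2 (by omega)) (ENNReal.natCast_ne_top _)
  have hγ1 : γ < 1 := by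
    rw [hγ, ENNReal.div_lt_iff (Or.inl (Nat.cast_ne_zero.2 (by omega)))
      (Or.inl (ENNReal.natCast_ne_top _)), one_mul, Nat.cast_lt]
    omega
  obtain ⟨N₀, hN₀⟩ := hL γ hγ0 hγ1 (max dA dB + 1)
  set N := max N₀ (4 * n) + 1 with hN
  obtain ⟨g, hgN, hag⟩ := hdiv a a₁ ha N
  obtain ⟨e, heN, hbe⟩ := hdiv b b₁ hb (N + 1)
  have hg : g ≤ a₁ := (one_nsmul g).symm.le.trans
    ((nsmul_le_nsmul_left (hCu.zero_le g) (by omega)).trans hgN)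
  have he : e ≤ b₁ := (one_nsmul e).symm.le.trans
    ((nsmul_le_nsmul_left (hCu.zero_le e) (by omega)).trans heN)
  -- `N ≥ 4n` is what makes `n (N+2) / ((n+1) N) ≤ γ`
  have hcomp : ∀ l : S → ℝ≥0∞, IsFunctional l → l g ≤ γ * l e := by
    intro l hl
    have h4n : (n + 1) * (4 * n) ≤ (n + 1) * N := Nat.mul_le_mul_left _ (by omega)
    refine ENNReal.le_div_mul_of_mul_le (p := (n + 1) * N) (q := n * (N + 2)) (by positivity)
      (by omega) (by nlinarith) ?_
    have h1 := hl.mono hgN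
    have h2 := hl.mono hab
    have h3 := hl.mono hbe
    rw [hl.map_nsmul] at h1 h3
    rw [hl.map_nsmul, hl.map_nsmul] at h2
    push_cast at h2 h3 ⊢
    calc ((n : ℝ≥0∞) + 1) * N * l g = (n + 1) * (N * l g) := by ring
      _ ≤ (n + 1) * l a₁ := by gcongr
      _ ≤ n * l b := h2
      _ ≤ n * ((N + 1 + 1) * l e) := by gcongr
      _ = n * (N + 2) * l e := by ring
  calc a ≤ (N + 1) • g := hag
    _ ≤ (N + 1) • e := hN₀ g e (hdA _ (le_max_left _ _) g hg) (hdB _ (le_max_right _ _) e he)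
        hcomp (N + 1) (by omega)
    _ ≤ b₁ := heN

theorem almostUnperforated_of_hasLBCA :
    ∀ x y : S, (∃ n : ℕ, (n + 1) • x ≤ n • y) → x ≤ y := by
  rintro x y ⟨n, h⟩
  refine hCu.le_of_forall_wayBelow_le fun a ha => ?_
  by_cases ha0 : a ≤ 0
  · exact ha0.trans (hCu.zero_le y)
  obtain ⟨a₁, haa₁, ha₁x⟩ := hCu.exists_wayBelow_wayBelow ha
  obtain ⟨b, hby, hab⟩ := hCu.exists_le_nsmul_of_wayBelow (hCu.wayBelow_nsmul ha₁x (n + 1)) h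
  obtain ⟨b₁, hbb₁, hb₁y⟩ := hCu.exists_wayBelow_wayBelow hby
  exact (hCu.le_of_nsmul_le_nsmul_of_hasLBCA hdiv hSg hL (hSg.zero_mem hCu.zero_le haa₁ ha0)
    haa₁ ha₁x hbb₁ hb₁y hab).trans hb₁y.le

end IsCuSemigroup

theorem stmt_6_general {S : Type*} [AddCommMonoid S] [PartialOrder S]
    (hCu : IsCuSemigroup S)
    (hdiv : ∀ x' x : S, WayBelow x' x → ∀ n : ℕ, ∃ y : S, n • y ≤ x ∧ x' ≤ (n + 1) • y) :
    ((∀ x y : S, (∃ n : ℕ, (n + 1) • x ≤ n • y) → x ≤ y) ↔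
      (∀ Sg : Set S, IsScale Sg → HasLBCA Sg)) ∧
    ((∀ x y : S, (∃ n : ℕ, (n + 1) • x ≤ n • y) → x ≤ y) ↔
      (∃ Sg : Set S, IsScale Sg ∧ HasLBCA Sg)) := by
  have hA := fun hunp Sg (_ : IsScale Sg) => hCu.hasLBCA_of_almostUnperforated hunp Sg
  have hC := fun Sg (hSg : IsScale Sg) hL => hCu.almostUnperforated_of_hasLBCA hdiv hSg hL
  exact ⟨⟨hA, fun h => hC _ isScale_univ (h _ isScale_univ)⟩,
    ⟨fun h => ⟨_, isScale_univ, hA h _ isScale_univ⟩, fun ⟨Sg, hSg, hL⟩ => hC Sg hSg hL⟩⟩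

/-- For an almost divisible Cu-semigroup with (O5): almost unperforation is equivalent
to LBCA for every scale, and to LBCA for some scale. -/
theorem stmt_6 {S : Type*} [AddCommMonoid S] [PartialOrder S]
    (hCu : IsCuSemigroup S) (hO5 : SatisfiesO5 S)
    (hdiv : ∀ x' x : S, WayBelow x' x → ∀ n : ℕ, ∃ y : S, n • y ≤ x ∧ x' ≤ (n + 1) • y) :
    ((∀ x y : S, (∃ n : ℕ, (n + 1) • x ≤ n • y) → x ≤ y) ↔
      (∀ Sg : Set S, IsScale Sg → HasLBCA Sg)) ∧
    ((∀ x y : S, (∃ n : ℕ, (n + 1) • x ≤ n • y) → x ≤ y) ↔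
      (∃ Sg : Set S, IsScale Sg ∧ HasLBCA Sg)) :=
  stmt_6_general hCu hdiv
end

section
/- Let N ∈ ℕ and let A be a C*-algebra with the property that for every a ∈ cl[A,A] there exist b_1,…,b_N, c_1,…,c_N ∈ A with ‖b_k‖ ≤ ‖a‖^{1/2} and ‖c_k‖ ≤ ‖a‖^{1/2} for k = 1,…,N such that ‖a − ∑_{k=1}^N [b_k,c_k]‖ ≤ (1/2)‖a‖. Then for every m ∈ ℕ and every a ∈ cl[A,A] there exist b_1,…,b_{mN}, c_1,…,c_{mN} ∈ A with ‖b_k‖ ≤ ‖a‖^{1/2} and ‖c_k‖ ≤ ‖a‖^{1/2} for k = 1,…,mN such that ‖a − ∑_{k=1}^{mN} [b_k,c_k]‖ ≤ (1/2^m)‖a‖. -/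
/-- If in a C*-algebra every element of the closed linear span of commutators can be
halved by `N` commutators with square-root norm control, then iterating, it can be
approximated up to `(1/2)^m` of its norm by `m*N` such commutators. -/
theorem stmt_11 (N : ℕ) (A : Type*) [NonUnitalCStarAlgebra A]
    (H : ∀ a ∈ closure
        ((Submodule.span ℂ {z : A | ∃ x y : A, z = x * y - y * x} : Submodule ℂ A) : Set A),
      ∃ b c : Fin N → A, (∀ k, ‖b k‖ ≤ Real.sqrt ‖a‖) ∧ (∀ k, ‖c k‖ ≤ Real.sqrt ‖a‖) ∧
        ‖a - ∑ k, (b k * c k - c k * b k)‖ ≤ (1 / 2) * ‖a‖) :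
    ∀ m : ℕ, ∀ a ∈ closure
        ((Submodule.span ℂ {z : A | ∃ x y : A, z = x * y - y * x} : Submodule ℂ A) : Set A),
      ∃ b c : Fin (m * N) → A, (∀ k, ‖b k‖ ≤ Real.sqrt ‖a‖) ∧ (∀ k, ‖c k‖ ≤ Real.sqrt ‖a‖) ∧
        ‖a - ∑ k, (b k * c k - c k * b k)‖ ≤ (1 / 2) ^ m * ‖a‖ := by
  set S : Submodule ℂ A := Submodule.span ℂ {z : A | ∃ x y : A, z = x * y - y * x} with hS
  intro m
  induction m with
  | zero =>
    intro a ha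
    exact ⟨fun _ => 0, fun _ => 0, fun k => by simp [Real.sqrt_nonneg],
      fun k => by simp [Real.sqrt_nonneg], by simp⟩
  | succ m ih =>
    intro a ha
    obtain ⟨b1, c1, hb1, hc1, hA⟩ := H a ha
    set s : A := ∑ k, (b1 k * c1 k - c1 k * b1 k) with hs
    have hsmem : s ∈ S := by
      refine Submodule.sum_mem _ fun k _ => Submodule.subset_span ⟨b1 k, c1 k, rfl⟩
    have ha'mem : a - s ∈ closure (S : Set A) := by
      have h1 : a ∈ S.topologicalClosure := by
        rw [← SetLike.mem_coe, Submodule.topologicalClosure_coe]; exact ha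
      have h2 : s ∈ S.topologicalClosure := S.le_topologicalClosure hsmem
      have h3 := sub_mem h1 h2
      rw [← SetLike.mem_coe, Submodule.topologicalClosure_coe] at h3
      exact h3
    obtain ⟨b2, c2, hb2, hc2, hA2⟩ := ih (a - s) ha'mem
    have hnorm : ‖a - s‖ ≤ ‖a‖ := hA.trans (by nlinarith [norm_nonneg a])
    have hsq : Real.sqrt ‖a - s‖ ≤ Real.sqrt ‖a‖ := Real.sqrt_le_sqrt hnorm
    rw [show (m + 1) * N = m * N + N from Nat.succ_mul m N]
    refine ⟨Fin.append b2 b1, Fin.append c2 c1, ?_, ?_, ?_⟩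
    · intro k
      refine Fin.addCases (fun i => ?_) (fun i => ?_) k
      · rw [Fin.append_left]; exact (hb2 i).trans hsq
      · rw [Fin.append_right]; exact hb1 i
    · intro k
      refine Fin.addCases (fun i => ?_) (fun i => ?_) k
      · rw [Fin.append_left]; exact (hc2 i).trans hsq
      · rw [Fin.append_right]; exact hc1 i
    · have hsplit : ∑ k : Fin (m * N + N),
          (Fin.append b2 b1 k * Fin.append c2 c1 k - Fin.append c2 c1 k * Fin.append b2 b1 k)
          = (∑ k : Fin (m * N), (b2 k * c2 k - c2 k * b2 k)) + s := by
        rw [Fin.sum_univ_add]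
        simp [Fin.append_left, Fin.append_right, hs]
      rw [hsplit]
      have : a - ((∑ k : Fin (m * N), (b2 k * c2 k - c2 k * b2 k)) + s)
          = (a - s) - ∑ k : Fin (m * N), (b2 k * c2 k - c2 k * b2 k) := by abel
      rw [this]
      calc ‖(a - s) - ∑ k : Fin (m * N), (b2 k * c2 k - c2 k * b2 k)‖
          ≤ (1 / 2) ^ m * ‖a - s‖ := hA2
        _ ≤ (1 / 2) ^ m * ((1 / 2) * ‖a‖) := by
            have : (0:ℝ) ≤ (1 / 2) ^ m := by positivity
            exact mul_le_mul_of_nonneg_left hA this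
        _ = (1 / 2) ^ (m + 1) * ‖a‖ := by ring
end

section
/- Let F and P be cancellative cones, and let ⟨·,·⟩ : F × P → ℝ be a pairing that is additive and (0,∞)-homogeneous in each variable. Let D ⊆ F be a subcone containing the zero element of F that is closed in the topology σ(F,P), defined as the coarsest topology on F making the map λ ↦ ⟨λ, f⟩ continuous for every f ∈ P. Then for every μ ∈ F \ D there exist f₁, f₂ ∈ P such that ⟨λ, f₁⟩ ≤ ⟨λ, f₂⟩ for all λ ∈ D, while ⟨μ, f₁⟩ > ⟨μ, f₂⟩. -/
/-- The structure of a cone: scalar multiplication by `(0,∞)` (encoded as the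
restriction of a map `ℝ → X → X` to positive scalars) compatible with the
commutative monoid structure. -/
structure IsConeSMul (X : Type*) [AddCommMonoid X] (sm : ℝ → X → X) : Prop where
  smul_add : ∀ t : ℝ, 0 < t → ∀ x y : X, sm t (x + y) = sm t x + sm t y
  add_smul : ∀ s t : ℝ, 0 < s → 0 < t → ∀ x : X, sm (s + t) x = sm s x + sm t x
  mul_smul : ∀ s t : ℝ, 0 < s → 0 < t → ∀ x : X, sm (s * t) x = sm s (sm t x)
  one_smul : ∀ x : X, sm 1 x = x
  smul_zero : ∀ t : ℝ, 0 < t → sm t 0 = 0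

/-- Hahn–Banach type separation theorem for a pair of cancellative cones in duality:
a point outside a `σ(F,P)`-closed subcone containing `0` can be separated by a pair of
elements of `P`. The topology `σ(F,P)` is the one induced by the map `F → (P → ℝ)`. -/
theorem stmt_17 {F P : Type*} [AddCommMonoid F] [AddCommMonoid P]
    (smF : ℝ → F → F) (smP : ℝ → P → P)
    (hF : IsConeSMul F smF) (hP : IsConeSMul P smP)
    (hFcanc : ∀ x y z : F, x + z = y + z → x = y)
    (hPcanc : ∀ x y z : P, x + z = y + z → x = y)
    (pair : F → P → ℝ)
    (pair_add_left : ∀ (x y : F) (f : P), pair (x + y) f = pair x f + pair y f)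
    (pair_smul_left : ∀ t : ℝ, 0 < t → ∀ (x : F) (f : P), pair (smF t x) f = t * pair x f)
    (pair_add_right : ∀ (x : F) (f g : P), pair x (f + g) = pair x f + pair x g)
    (pair_smul_right : ∀ t : ℝ, 0 < t → ∀ (x : F) (f : P), pair x (smP t f) = t * pair x f)
    (D : Set F) (hD0 : (0 : F) ∈ D)
    (hDadd : ∀ x ∈ D, ∀ y ∈ D, x + y ∈ D)
    (hDsmul : ∀ t : ℝ, 0 < t → ∀ x ∈ D, smF t x ∈ D)
    (hDclosed : @IsClosed F
      (TopologicalSpace.induced (fun x : F => fun f : P => pair x f)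
        (Pi.topologicalSpace (Y := fun _ : P => ℝ))) D)
    (mu : F) (hmu : mu ∉ D) :
    ∃ f₁ f₂ : P, (∀ x ∈ D, pair x f₁ ≤ pair x f₂) ∧ pair mu f₂ < pair mu f₁ := by
  classical
  set Φ : F → (P → ℝ) := fun x => fun f => pair x f with hΦ
  -- basic facts about the pairing at zero
  have pair0_left : ∀ f : P, pair 0 f = 0 := by
    intro f
    have h := pair_add_left 0 0 f
    rw [add_zero] at h
    linarith
  have pair0_right : ∀ x : F, pair x 0 = 0 := by
    intro x
    have h := pair_add_right x 0 0
    rw [add_zero] at h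
    linarith
  -- μ is not in the closure of Φ '' D in the product topology
  have hmu' : Φ mu ∉ closure (Φ '' D) := by
    intro h
    letI : TopologicalSpace F :=
      TopologicalSpace.induced (fun x : F => fun f : P => pair x f)
        (Pi.topologicalSpace (Y := fun _ : P => ℝ))
    exact hmu (hDclosed.closure_subset (closure_induced.2 h))
  -- extract a basic open neighbourhood disjoint from Φ '' D
  obtain ⟨o, ho, hmo, hdisj⟩ :
      ∃ o : Set (P → ℝ), IsOpen o ∧ Φ mu ∈ o ∧ ¬ (o ∩ Φ '' D).Nonempty := by
    by_contra h
    push_neg at h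
    exact hmu' (mem_closure_iff.2 fun o ho hx => h o ho hx)
  obtain ⟨I, u, hu, hsub⟩ := isOpen_pi_iff.1 ho (Φ mu) hmo
  -- work in the finite-dimensional space V = I → ℝ
  set ψ : F → ({p // p ∈ I} → ℝ) := fun x => fun i => pair x i.1 with hψ
  have hψ_smul : ∀ t : ℝ, 0 < t → ∀ x : F, ψ (smF t x) = t • ψ x := by
    intro t ht x
    funext i
    simp [hψ, pair_smul_left t ht]
  have hψ_zero : ψ 0 = 0 := by
    funext i
    simp [hψ, pair0_left]
  -- ψ mu is not in the closure of ψ '' D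
  have hmuV : ψ mu ∉ closure (ψ '' D) := by
    rw [mem_closure_iff]
    push_neg
    refine ⟨{v | ∀ i : {p // p ∈ I}, v i ∈ u i.1}, ?_, ?_, ?_⟩
    · have : {v : {p // p ∈ I} → ℝ | ∀ i, v i ∈ u i.1}
          = Set.pi Set.univ (fun i : {p // p ∈ I} => u i.1) := by
        ext v; simp [Set.mem_pi]
      rw [this]
      exact isOpen_set_pi Set.finite_univ (fun i _ => (hu i.1 i.2).1)
    · intro i
      exact (hu i.1 i.2).2
    · rw [Set.eq_empty_iff_forall_notMem]
      rintro v ⟨hv, x, hxD, rfl⟩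
      have hΦx : Φ x ∈ (I : Set P).pi u := by
        intro p hp
        exact hv ⟨p, hp⟩
      exact hdisj ⟨Φ x, hsub hΦx, ⟨x, hxD, rfl⟩⟩
  -- the closure of ψ '' D is a closed convex set
  have hconv : Convex ℝ (ψ '' D) := by
    rintro v ⟨x, hx, rfl⟩ w ⟨y, hy, rfl⟩ a b ha hb hab
    rcases eq_or_lt_of_le ha with ha0 | ha0
    · have hb1 : b = 1 := by linarith
      subst hb1
      rw [← ha0]
      simpa using ⟨y, hy, rfl⟩
    rcases eq_or_lt_of_le hb with hb0 | hb0
    · have ha1 : a = 1 := by linarith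
      subst ha1
      rw [← hb0]
      simpa using ⟨x, hx, rfl⟩
    refine ⟨smF a x + smF b y, hDadd _ (hDsmul a ha0 x hx) _ (hDsmul b hb0 y hy), ?_⟩
    funext i
    simp [hψ, pair_add_left, pair_smul_left a ha0, pair_smul_left b hb0]
  -- separate by a continuous linear functional
  obtain ⟨f, c0, hfD, hfmu⟩ :=
    geometric_hahn_banach_closed_point (hconv.closure) isClosed_closure hmuV
  have hc0pos : 0 < c0 := by
    have h0 : (0 : {p // p ∈ I} → ℝ) ∈ closure (ψ '' D) :=
      subset_closure ⟨0, hD0, hψ_zero⟩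
    have := hfD 0 h0
    simpa using this
  -- f is nonpositive on ψ '' D (cone argument)
  have hfle : ∀ x ∈ D, f (ψ x) ≤ 0 := by
    intro x hx
    by_contra h
    push_neg at h
    set t : ℝ := c0 / f (ψ x) with ht
    have htpos : 0 < t := div_pos hc0pos h
    have hmem : smF t x ∈ D := hDsmul t htpos x hx
    have := hfD (ψ (smF t x)) (subset_closure ⟨_, hmem, rfl⟩)
    rw [hψ_smul t htpos, map_smul] at this
    have : t * f (ψ x) < c0 := by simpa using this
    rw [ht, div_mul_cancel₀ _ (ne_of_gt h)] at this
    exact lt_irrefl _ this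
  have hfmu' : 0 < f (ψ mu) := lt_trans hc0pos hfmu
  -- coefficients of f
  set c : {p // p ∈ I} → ℝ := fun i => f (fun j => if i = j then 1 else 0) with hc
  have hf_eq : ∀ v : {p // p ∈ I} → ℝ, f v = ∑ i, v i * c i := by
    intro v
    conv_lhs => rw [pi_eq_sum_univ v]
    rw [map_sum]
    refine Finset.sum_congr rfl fun i _ => ?_
    rw [map_smul]
    simp [hc]
  -- split into positive and negative coefficients
  set pos : Finset {p // p ∈ I} := Finset.univ.filter (fun i => 0 < c i) with hpos
  set neg : Finset {p // p ∈ I} := Finset.univ.filter (fun i => c i < 0) with hneg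
  set f₁ : P := ∑ i ∈ pos, smP (c i) i.1 with hf₁
  set f₂ : P := ∑ i ∈ neg, smP (-(c i)) i.1 with hf₂
  -- pairing with a sum
  have pair_sum : ∀ (x : F) (s : Finset {p // p ∈ I}) (g : {p // p ∈ I} → P),
      pair x (∑ i ∈ s, g i) = ∑ i ∈ s, pair x (g i) := by
    intro x s g
    exact map_sum (AddMonoidHom.mk' (pair x) (pair_add_right x)) g s
  have key : ∀ x : F, pair x f₁ = pair x f₂ + f (ψ x) := by
    intro x
    have h1 : pair x f₁ = ∑ i ∈ pos, c i * pair x i.1 := by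
      rw [hf₁, pair_sum]
      refine Finset.sum_congr rfl fun i hi => ?_
      rw [hpos] at hi
      exact pair_smul_right (c i) (Finset.mem_filter.1 hi).2 x i.1
    have h2 : pair x f₂ = -∑ i ∈ neg, c i * pair x i.1 := by
      rw [hf₂, pair_sum, ← Finset.sum_neg_distrib]
      refine Finset.sum_congr rfl fun i hi => ?_
      rw [hneg] at hi
      rw [pair_smul_right (-(c i)) (by linarith [(Finset.mem_filter.1 hi).2]) x i.1]
      ring
    have h3 : f (ψ x) = ∑ i ∈ pos, c i * pair x i.1 + ∑ i ∈ neg, c i * pair x i.1 := by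
      rw [hf_eq]
      have hsplit := Finset.sum_filter_add_sum_filter_not Finset.univ
        (fun i => 0 < c i) (fun i => ψ x i * c i)
      have hrest : ∑ i ∈ Finset.univ.filter (fun i => ¬ 0 < c i), ψ x i * c i
          = ∑ i ∈ neg, ψ x i * c i := by
        refine (Finset.sum_subset ?_ ?_).symm
        · intro i hi
          rw [hneg] at hi
          simp only [Finset.mem_filter, Finset.mem_univ, true_and] at hi ⊢
          linarith
        · intro i hi hni
          rw [hneg] at hni
          simp only [Finset.mem_filter, Finset.mem_univ, true_and, not_lt] at hi hni
          have : c i = 0 := le_antisymm hi hni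
          simp [this]
      rw [← hsplit, hrest]
      simp only [hψ]
      ring_nf
      congr 1 <;> exact Finset.sum_congr rfl fun i _ => by ring
    rw [h1, h2, h3]
    ring
  refine ⟨f₁, f₂, fun x hx => ?_, ?_⟩
  · have := hfle x hx
    have hk := key x
    linarith
  · have hk := key mu
    linarith
end
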